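/- arXiv:2306.04625 — 2 statements merged into one kernel-verified Lean document; each statement's English description precedes it below -/
import Mathlib

section
/- For any nonzero σ ∈ ℝ and any point (x,y,z) on the unit sphere with y ≠ 1, applying the pole-warp transformation f with parameter σ followed by f with parameter 1/σ returns the original point (x,y,z). -/
noncomputable section

/-- Pole-warp transformation: `warp x y z σ = (x̂, ŷ, ẑ)`. -/
def warp (x y z σ : ℝ) : ℝ × ℝ × ℝ :=
  let xσ := σ * x / (1 - y)
  let zσ := σ * z / (1 - y)
  let δ := 2 / (1 + xσ ^ 2 + zσ ^ 2)
  (xσ * δ, 1 - δ, zσ * δ)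

/-- Two-argument arctangent, `atan2 b a` is the argument of the point `(a, b)`. -/
def atan2 (b a : ℝ) : ℝ := Complex.arg ⟨a, b⟩

/-! The warp is the conjugate of the dilation `(u, v) ↦ (σ u, σ v)` by the stereographic projection
`(x, y, z) ↦ (x, z) / (1 - y)` from the pole `(0, 1, 0)`; `inverseStereographic` is the inverse of
that projection. Conjugates of the dilations by `σ` and `1 / σ` compose to the identity. -/

def inverseStereographic (u v : ℝ) : ℝ × ℝ × ℝ :=
  let δ := 2 / (1 + u ^ 2 + v ^ 2)
  (u * δ, 1 - δ, v * δ)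

theorem warp_eq_inverseStereographic (x y z σ : ℝ) :
    warp x y z σ = inverseStereographic (σ * x / (1 - y)) (σ * z / (1 - y)) :=
  rfl

theorem warp_inverseStereographic (u v τ : ℝ) :
    warp (inverseStereographic u v).1 (inverseStereographic u v).2.1
      (inverseStereographic u v).2.2 τ = inverseStereographic (τ * u) (τ * v) := by
  have hδ : 2 / (1 + u ^ 2 + v ^ 2) ≠ 0 := by positivity
  simp only [warp, inverseStereographic, sub_sub_cancel, mul_div_assoc, mul_div_cancel_right₀ _ hδ]

theorem inverseStereographic_div_one_sub {x y z : ℝ} (hsph : x ^ 2 + y ^ 2 + z ^ 2 = 1)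
    (hy : y ≠ 1) : inverseStereographic (x / (1 - y)) (z / (1 - y)) = (x, y, z) := by
  have hy' : 1 - y ≠ 0 := sub_ne_zero.mpr hy.symm
  have hδ : 2 / (1 + (x / (1 - y)) ^ 2 + (z / (1 - y)) ^ 2) = 1 - y := by
    rw [div_eq_iff (by positivity)]
    field_simp
    linear_combination -hsph
  simp only [inverseStereographic, hδ, div_mul_cancel₀ _ hy', sub_sub_cancel]

theorem warp_inv (σ x y z : ℝ) (hσ : σ ≠ 0)
    (hsph : x ^ 2 + y ^ 2 + z ^ 2 = 1) (hy : y ≠ 1) :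
    warp (warp x y z σ).1 (warp x y z σ).2.1 (warp x y z σ).2.2 (1 / σ) = (x, y, z) := by
  have hcancel (w : ℝ) : 1 / σ * (σ * w / (1 - y)) = w / (1 - y) := by field_simp
  rw [warp_eq_inverseStereographic x y z σ, warp_inverseStereographic, hcancel, hcancel]
  exact inverseStereographic_div_one_sub hsph hy
end
end

section
/- Whenever a₁ ≠ b₁, the slope (a₂ - b₂)/(a₁ - b₁) of the chord joining a = (cos((2σ/π)φ), sin((2σ/π)φ)) and b = (cos(π + (2(π-σ)/π)φ), -sin(π + (2(π-σ)/π)φ)) equals -tan(φ - (2σ/π)φ). -/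
noncomputable section

theorem chord_slope (σ φ : ℝ) (hφ : φ ∈ Set.Icc 0 Real.pi)
    (hne : Real.cos (2 * σ / Real.pi * φ) ≠
      Real.cos (Real.pi + 2 * (Real.pi - σ) / Real.pi * φ))
    (hcos : Real.cos (φ - 2 * σ / Real.pi * φ) ≠ 0) :
    (Real.sin (2 * σ / Real.pi * φ) -
        -Real.sin (Real.pi + 2 * (Real.pi - σ) / Real.pi * φ)) /
      (Real.cos (2 * σ / Real.pi * φ) -
        Real.cos (Real.pi + 2 * (Real.pi - σ) / Real.pi * φ)) =
      -Real.tan (φ - 2 * σ / Real.pi * φ) := by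
  have hpi := Real.pi_ne_zero
  have h2 : Real.pi + 2 * (Real.pi - σ) / Real.pi * φ
      = Real.pi + (2 * φ - 2 * σ / Real.pi * φ) := by
    field_simp
  rw [h2] at hne ⊢
  set a := 2 * σ / Real.pi * φ with ha
  have hnum : Real.sin a - -Real.sin (Real.pi + (2 * φ - a))
      = -(2 * Real.cos φ * Real.sin (φ - a)) := by
    simp [Real.sin_add, Real.cos_add, Real.sin_sub, Real.cos_sub, Real.sin_two_mul, Real.cos_two_mul]
    ring
  have hden : Real.cos a - Real.cos (Real.pi + (2 * φ - a))
      = 2 * Real.cos φ * Real.cos (φ - a) := by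
    simp [Real.sin_add, Real.cos_add, Real.sin_sub, Real.cos_sub, Real.sin_two_mul, Real.cos_two_mul]
    ring
  have hcφ : Real.cos φ ≠ 0 := by
    intro h
    apply hne
    have := hden
    rw [h] at this
    simp at this
    linarith [this]
  rw [hnum, hden, Real.tan_eq_sin_div_cos]
  field_simp
end
end
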